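/- arXiv:2211.07471 — 2 statements merged into one kernel-verified Lean document; each statement's English description precedes it below -/
import Mathlib

section
/- For all b ∈ ℝ: V^{sk}(b) ≥ V^{fw}(b), where V^{sk}(b) = rT + (θσT + σb)·𝟙{b > −θT} and V^{fw}(b) = rT + (1/2)(θ + b/T)²T·𝟙{−θT < b ≤ −θT + σT} + (θσT + σb − (1/2)σ²T)·𝟙{b > −θT + σT}. Moreover the inequality is strict whenever b > −θT. -/
/-!
Both values equal `r T` plus a gain depending only on the excess `u = θ T + b` of the terminal
value over `-θ T`: the Skorokhod gain is `σ u` for `u > 0`, while the forward gain is `u² / (2T)`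
for `0 < u ≤ σ T` and `σ u - σ² T / 2` beyond. Where `u ≤ 0` both gains vanish; where `u > 0` the
forward gain is smaller, since `u² / (2T) ≤ σ u / 2` as long as `u ≤ σ T`.
-/

noncomputable section

def skorokhodGain (σ u : ℝ) : ℝ := if 0 < u then σ * u else 0

def forwardGain (σ T u : ℝ) : ℝ :=
  if u ≤ 0 then 0 else if u ≤ σ * T then u ^ 2 / (2 * T) else σ * u - σ ^ 2 * T / 2

end

section Gains

variable {σ T u : ℝ}

theorem sq_div_two_mul_lt_mul (hT : 0 < T) (hu : 0 < u) (huσ : u ≤ σ * T) :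
    u ^ 2 / (2 * T) < σ * u := by
  rw [div_lt_iff₀ (by positivity)]
  nlinarith

theorem forwardGain_lt_skorokhodGain (hσ : 0 < σ) (hT : 0 < T) (hu : 0 < u) :
    forwardGain σ T u < skorokhodGain σ u := by
  rw [forwardGain, skorokhodGain, if_neg hu.not_ge, if_pos hu]
  split_ifs with huσ
  · exact sq_div_two_mul_lt_mul hT hu huσ
  · have : 0 < σ ^ 2 * T := by positivity
    linarith

theorem forwardGain_le_skorokhodGain (hσ : 0 < σ) (hT : 0 < T) :
    forwardGain σ T u ≤ skorokhodGain σ u := by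
  rcases le_or_gt u 0 with hu | hu
  · simp [forwardGain, skorokhodGain, hu, hu.not_gt]
  · exact (forwardGain_lt_skorokhodGain hσ hT hu).le

end Gains

theorem skorokhod_value_eq_gain (θ σ T b : ℝ) :
    (θ * σ * T + σ * b) * (if b > -θ * T then 1 else 0) = skorokhodGain σ (θ * T + b) := by
  have hcond : b > -θ * T ↔ 0 < θ * T + b := by constructor <;> intro h <;> linarith
  simp only [skorokhodGain, gt_iff_lt, hcond]
  split_ifs <;> ring

theorem forward_value_eq_gain {σ T : ℝ} (hσT : 0 < σ * T) (θ b : ℝ) :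
    ((1/2) * (θ + b / T)^2 * T) * (if -θ * T < b ∧ b ≤ -θ * T + σ * T then 1 else 0)
      + (θ * σ * T + σ * b - (1/2) * σ^2 * T) * (if b > -θ * T + σ * T then 1 else 0)
      = forwardGain σ T (θ * T + b) := by
  rw [forwardGain]
  rcases le_or_gt (θ * T + b) 0 with hu | hu
  · rw [if_pos hu, if_neg (by intro h; linarith [h.1]), if_neg (by linarith)]
    ring
  rw [if_neg hu.not_ge]
  rcases le_or_gt (θ * T + b) (σ * T) with huσ | huσ
  · rw [if_pos ⟨by linarith, by linarith⟩, if_neg (by linarith), if_pos huσ]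
    have hT : T ≠ 0 := right_ne_zero_of_mul hσT.ne'
    field_simp
    ring
  · rw [if_neg (by intro h; linarith [h.2]), if_pos (by linarith), if_neg huσ.not_ge]
    ring

theorem skorokhod_dominates_forward_general
    (r σ T θ : ℝ) (hσ : 0 < σ) (hT : 0 < T)
    (Vsk Vfw : ℝ → ℝ)
    (hsk : ∀ b : ℝ, Vsk b = r * T + (θ * σ * T + σ * b) * (if b > -θ * T then 1 else 0))
    (hfw : ∀ b : ℝ, Vfw b = r * T
      + ((1/2) * (θ + b / T)^2 * T) * (if -θ * T < b ∧ b ≤ -θ * T + σ * T then 1 else 0)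
      + (θ * σ * T + σ * b - (1/2) * σ^2 * T) * (if b > -θ * T + σ * T then 1 else 0)) :
    (∀ b : ℝ, Vfw b ≤ Vsk b) ∧ (∀ b : ℝ, b > -θ * T → Vfw b < Vsk b) := by
  have hsk_gain (b : ℝ) : Vsk b = r * T + skorokhodGain σ (θ * T + b) := by
    rw [hsk, skorokhod_value_eq_gain]
  have hfw_gain (b : ℝ) : Vfw b = r * T + forwardGain σ T (θ * T + b) := by
    rw [hfw, add_assoc, forward_value_eq_gain (mul_pos hσ hT)]
  refine ⟨fun b => ?_, fun b hb => ?_⟩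
  · rw [hsk_gain, hfw_gain]
    exact add_le_add_right (forwardGain_le_skorokhodGain hσ hT) _
  · rw [hsk_gain, hfw_gain]
    exact add_lt_add_right (forwardGain_lt_skorokhodGain hσ hT (by linarith)) _

/-- V^{sk}(b) ≥ V^{fw}(b) for all b, with strict inequality whenever
b > −θT. -/
theorem skorokhod_dominates_forward
    (μ r σ T θ : ℝ) (hσ : 0 < σ) (hT : 0 < T) (hθ : θ = (μ - r) / σ)
    (Vsk Vfw : ℝ → ℝ)
    (hsk : ∀ b : ℝ, Vsk b = r * T + (θ * σ * T + σ * b) * (if b > -θ * T then 1 else 0))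
    (hfw : ∀ b : ℝ, Vfw b = r * T
      + ((1/2) * (θ + b / T)^2 * T) * (if -θ * T < b ∧ b ≤ -θ * T + σ * T then 1 else 0)
      + (θ * σ * T + σ * b - (1/2) * σ^2 * T) * (if b > -θ * T + σ * T then 1 else 0)) :
    (∀ b : ℝ, Vfw b ≤ Vsk b) ∧ (∀ b : ℝ, b > -θ * T → Vfw b < Vsk b) :=
  skorokhod_dominates_forward_general r σ T θ hσ hT Vsk Vfw hsk hfw
end

section
/- For the criterion G arising from V_T^π = ∫₀ᵀ [r + (μ−r+σb/T)π − (σ²/2)π² + (σ/T)π∫_tᵀ πσ ds] dt with constant π and constant coefficients, one has G(π) = rT + (μ−r)πT + σbπ; that is, the quadratic terms −(σ²/2)π²T and (σ²/2)π²T cancel exactly, so V_T is affine in π. -/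
/-- the Skorokhod insider's expected log utility with constant
parameters is affine in π: the quadratic terms cancel exactly and
V_T^π = rT + (μ−r)πT + σbπ. -/
theorem skorokhod_value_affine
    (μ r b σ T π : ℝ) (hσ : 0 < σ) (hT : 0 < T) :
    (∫ t in (0:ℝ)..T, (r + (μ - r + σ * b / T) * π - (1/2) * σ^2 * π^2
        + (σ / T) * π * (∫ s in t..T, π * σ)))
      = r * T + (μ - r) * π * T + σ * b * π := by
  have h1 : ∀ t : ℝ, (∫ s in t..T, π * σ) = (T - t) * (π * σ) := by
    intro t; rw [intervalIntegral.integral_const]; simp [smul_eq_mul]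
  simp_rw [h1]
  have h2 : (∫ t in (0:ℝ)..T, (r + (μ - r + σ * b / T) * π - (1/2) * σ^2 * π^2
        + (σ / T) * π * ((T - t) * (π * σ))))
      = (∫ t in (0:ℝ)..T, ((r + (μ - r + σ * b / T) * π - (1/2) * σ^2 * π^2
        + (σ / T) * π * (T * (π * σ))) + (-(σ / T) * π * π * σ) * t)) := by
    apply intervalIntegral.integral_congr; intro t _; ring
  rw [h2]
  rw [intervalIntegral.integral_add (intervalIntegrable_const)
      ((intervalIntegral.intervalIntegrable_id).const_mul _)]
  rw [intervalIntegral.integral_const, intervalIntegral.integral_const_mul,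
      integral_id]
  have hT0 : T ≠ 0 := ne_of_gt hT
  field_simp
  have hTi : T * T⁻¹ = 1 := mul_inv_cancel₀ hT0
  linear_combination (2*T*σ*b*π - 2*T^2*r*π + 2*T^2*r + 2*T^2*μ*π + T^2*σ^2*π^2) * hTi
end
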